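/- arXiv:2604.17792 — 2 statements merged into one kernel-verified Lean document; each statement's English description precedes it below -/
import Mathlib

section
/- The form E(β, γ) := 2·Re(Tr(β J γ*)) on M_{n×r}(ℂ) is ℝ-bilinear and alternating (E(β, β) = 0 for all β), and it is positive with respect to the complex structure I_Z: for every β ≠ 0 one has E(β, I_Z β) > 0. -/
/-!
Write `Z = X + iY` with `X`, `Y` Hermitian. Solving `φ_Z γ = i φ_Z β` for `γ` in block form gives
`I_Z β = (W Y⁻¹ | -β₁ Y - W Y⁻¹ X)` with `W = β₁ X + β₂`, and then
`E(β, I_Z β) = 2 Re Tr(β₁ Y β₁*) + 2 Re Tr(W Y⁻¹ W*)`. Both traces are nonnegative since `Y` and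
`Y⁻¹` are positive definite; the first is positive when `β₁ ≠ 0`, the second when `β₁ = 0 ≠ β₂`.
`E` is alternating because `J` is skew-Hermitian.
-/

open Matrix ComplexOrder

noncomputable section

/-- The entrywise complex conjugate of a matrix. -/
def matConj {k l : Type*} (M : Matrix k l ℂ) : Matrix k l ℂ :=
  M.map (starRingEnd ℂ)

/-- The matrix `J = [[0_m, -1_m],[1_m, 0_m]]` over `ℂ`. -/
def formJ (m : ℕ) : Matrix (Fin m ⊕ Fin m) (Fin m ⊕ Fin m) ℂ :=
  Matrix.fromBlocks 0 (-1) 1 0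

/-- The real-valued form `E(β, γ) = 2·Re(Tr(β J γ*))` on `M_{n×r}(ℂ)` (with `r = 2m`,
columns indexed by `Fin m ⊕ Fin m`). -/
def formE {n m : ℕ} (β γ : Matrix (Fin n) (Fin m ⊕ Fin m) ℂ) : ℝ :=
  2 * (Matrix.trace (β * formJ m * γᴴ)).re

/-- The formula for the `ℝ`-linear map `φ_Z : β = (β₁ | β₂) ↦ (β₁Z + β₂, conj(β₁)Zᵀ + conj(β₂))`,
where `β₁` and `β₂` are the first and last `m` columns of `β`. -/
def phiZFormula {n m : ℕ} (Z : Matrix (Fin m) (Fin m) ℂ)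
    (β : Matrix (Fin n) (Fin m ⊕ Fin m) ℂ) :
    Matrix (Fin n) (Fin m) ℂ × Matrix (Fin n) (Fin m) ℂ :=
  (β.submatrix id Sum.inl * Z + β.submatrix id Sum.inr,
    matConj (β.submatrix id Sum.inl) * Zᵀ + matConj (β.submatrix id Sum.inr))

open Complex (I)

section Positivity

variable {k l : Type*} [Fintype l]

lemma mul_mul_conjTranspose_apply_self (B : Matrix k l ℂ) (M : Matrix l l ℂ) (j : k) :
    (B * M * Bᴴ) j j = B j ⬝ᵥ (M *ᵥ star (B j)) := by
  rw [Matrix.mul_assoc, mul_apply']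
  rfl

variable [Fintype k]

lemma re_trace_mul_mul_conjTranspose_nonneg {M : Matrix l l ℂ} (hM : M.PosSemidef)
    (B : Matrix k l ℂ) : 0 ≤ (B * M * Bᴴ).trace.re :=
  (Complex.le_def.mp (hM.mul_mul_conjTranspose_same B).trace_nonneg).1

lemma re_trace_mul_mul_conjTranspose_pos {M : Matrix l l ℂ} (hM : M.PosDef)
    {B : Matrix k l ℂ} (hB : B ≠ 0) : 0 < (B * M * Bᴴ).trace.re := by
  obtain ⟨j₀, hj₀⟩ : ∃ j, B j ≠ 0 := Function.ne_iff.mp hB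
  rw [trace, Complex.re_sum]
  refine Finset.sum_pos' (fun j _ => ?_) ⟨j₀, Finset.mem_univ _, ?_⟩
  · simpa [mul_mul_conjTranspose_apply_self] using
      (Complex.le_def.mp (hM.posSemidef.dotProduct_mulVec_nonneg (star (B j)))).1
  · simpa [mul_mul_conjTranspose_apply_self] using
      (Complex.lt_def.mp (hM.dotProduct_mulVec_pos (star_ne_zero.mpr hj₀))).1

end Positivity

section Form

variable {n m : ℕ}

lemma formE_add_left (β β' γ : Matrix (Fin n) (Fin m ⊕ Fin m) ℂ) :
    formE (β + β') γ = formE β γ + formE β' γ := by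
  simp only [formE, Matrix.add_mul, trace_add, Complex.add_re]
  ring

lemma formE_add_right (β γ γ' : Matrix (Fin n) (Fin m ⊕ Fin m) ℂ) :
    formE β (γ + γ') = formE β γ + formE β γ' := by
  simp only [formE, conjTranspose_add, Matrix.mul_add, trace_add, Complex.add_re]
  ring

lemma formE_smul_left (c : ℝ) (β γ : Matrix (Fin n) (Fin m ⊕ Fin m) ℂ) :
    formE (c • β) γ = c * formE β γ := by
  simp only [formE, Matrix.smul_mul, trace_smul, Complex.smul_re]
  ring

lemma formE_smul_right (c : ℝ) (β γ : Matrix (Fin n) (Fin m ⊕ Fin m) ℂ) :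
    formE β (c • γ) = c * formE β γ := by
  simp only [formE, conjTranspose_smul, star_trivial, Matrix.mul_smul, trace_smul, Complex.smul_re]
  ring

lemma formJ_conjTranspose : (formJ m)ᴴ = -formJ m := by
  simp [formJ, fromBlocks_conjTranspose, fromBlocks_neg]

lemma formE_self (β : Matrix (Fin n) (Fin m ⊕ Fin m) ℂ) : formE β β = 0 := by
  have skew : star (β * formJ m * βᴴ).trace = -(β * formJ m * βᴴ).trace := by
    rw [← trace_conjTranspose, conjTranspose_mul, conjTranspose_mul, conjTranspose_conjTranspose,
      formJ_conjTranspose, Matrix.neg_mul, Matrix.mul_neg, trace_neg, Matrix.mul_assoc]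
  have := congrArg Complex.re skew
  simp only [Complex.star_def, Complex.conj_re, Complex.neg_re] at this
  simp only [formE, mul_eq_zero]
  right
  linarith

lemma formE_fromCols (B₁ B₂ C₁ C₂ : Matrix (Fin n) (Fin m) ℂ) :
    formE (fromCols B₁ B₂) (fromCols C₁ C₂) = 2 * ((B₂ * C₁ᴴ).trace - (B₁ * C₂ᴴ).trace).re := by
  rw [formE, formJ, fromCols_mul_fromBlocks, conjTranspose_fromCols_eq_fromRows_conjTranspose,
    fromCols_mul_fromRows]
  simp [Matrix.neg_mul, trace_add, trace_neg, sub_eq_add_neg]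

lemma phiZFormula_fromCols (Z : Matrix (Fin m) (Fin m) ℂ) (B₁ B₂ : Matrix (Fin n) (Fin m) ℂ) :
    phiZFormula Z (fromCols B₁ B₂) = (B₁ * Z + B₂, matConj (B₁ * Zᴴ + B₂)) := by
  have conj_conjTranspose : matConj Zᴴ = Zᵀ := by ext; simp [matConj]
  rw [phiZFormula, ← conj_conjTranspose]
  simp only [matConj, Matrix.map_mul, Matrix.map_add _ (map_add (starRingEnd ℂ))]
  rfl

end Form

section ComplexStructure

variable {k l : Type*}

lemma isHermitian_sub_I_smul (Z : Matrix l l ℂ) :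
    (Z - I • ((2 * I)⁻¹ • (Z - Zᴴ))).IsHermitian := by
  have half : I * (2 * I)⁻¹ = 2⁻¹ := by field_simp
  rw [smul_smul, half, IsHermitian, conjTranspose_sub, conjTranspose_smul, conjTranspose_sub,
    conjTranspose_conjTranspose, star_inv₀, star_ofNat]
  module

variable [Fintype l] [DecidableEq l]

/-- The solution `γ = (G₁ | G₂)` of `G₁ Z + G₂ = i (B₁ Z + B₂)` and
`G₁ Z* + G₂ = -i (B₁ Z* + B₂)` for `Z = X + iY`, i.e. of `φ_Z γ = i φ_Z (B₁ | B₂)`. -/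
def complexStructure (X Y : Matrix l l ℂ) (B₁ B₂ : Matrix k l ℂ) : Matrix k (l ⊕ l) ℂ :=
  fromCols ((B₁ * X + B₂) * Y⁻¹) (-(B₁ * Y) - (B₁ * X + B₂) * Y⁻¹ * X)

lemma complexStructure_cols_mul_add {s : ℂ} (hs : s * s = -1) {X Y : Matrix l l ℂ}
    (hY : Y⁻¹ * Y = 1) (B₁ B₂ : Matrix k l ℂ) :
    (B₁ * X + B₂) * Y⁻¹ * (X + s • Y) + (-(B₁ * Y) - (B₁ * X + B₂) * Y⁻¹ * X) =
      s • (B₁ * (X + s • Y) + B₂) := by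
  have hW : (B₁ * X + B₂) * Y⁻¹ * Y = B₁ * X + B₂ := by rw [Matrix.mul_assoc, hY, Matrix.mul_one]
  simp only [Matrix.mul_add, Matrix.mul_smul, hW, smul_add, smul_smul, hs, neg_one_smul]
  abel

lemma phiZFormula_complexStructure {n m : ℕ} {X Y : Matrix (Fin m) (Fin m) ℂ}
    (hX : X.IsHermitian) (hY : Y.IsHermitian) (hYdet : IsUnit Y.det)
    (B₁ B₂ : Matrix (Fin n) (Fin m) ℂ) :
    phiZFormula (X + I • Y) (complexStructure X Y B₁ B₂) =
      I • phiZFormula (X + I • Y) (fromCols B₁ B₂) := by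
  have hYinv := nonsing_inv_mul Y hYdet
  have hZH : (X + I • Y)ᴴ = X + (-I) • Y := by
    rw [conjTranspose_add, conjTranspose_smul, hX.eq, hY.eq, Complex.star_def, Complex.conj_I]
  rw [complexStructure, phiZFormula_fromCols, phiZFormula_fromCols, hZH, Prod.smul_mk,
    complexStructure_cols_mul_add Complex.I_mul_I hYinv,
    complexStructure_cols_mul_add (by rw [neg_mul_neg, Complex.I_mul_I]) hYinv]
  ext <;> simp [matConj, mul_add]

lemma formE_complexStructure {n m : ℕ} {X Y : Matrix (Fin m) (Fin m) ℂ}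
    (hX : X.IsHermitian) (hY : Y.IsHermitian) (B₁ B₂ : Matrix (Fin n) (Fin m) ℂ) :
    formE (fromCols B₁ B₂) (complexStructure X Y B₁ B₂) =
      2 * ((B₁ * Y * B₁ᴴ).trace + ((B₁ * X + B₂) * Y⁻¹ * (B₁ * X + B₂)ᴴ).trace).re := by
  have hYinv : (Y⁻¹)ᴴ = Y⁻¹ := by rw [conjTranspose_nonsing_inv, hY.eq]
  rw [complexStructure, formE_fromCols]
  congr 2
  simp only [conjTranspose_sub, conjTranspose_neg, conjTranspose_mul, conjTranspose_add,
    hX.eq, hY.eq, hYinv, Matrix.mul_add, Matrix.add_mul, Matrix.mul_sub,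
    Matrix.mul_neg, trace_add, trace_sub, trace_neg, Matrix.mul_assoc]
  ring

lemma formE_complexStructure_pos {n m : ℕ} {X Y : Matrix (Fin m) (Fin m) ℂ}
    (hX : X.IsHermitian) (hY : Y.PosDef) {B₁ B₂ : Matrix (Fin n) (Fin m) ℂ}
    (hB : fromCols B₁ B₂ ≠ 0) : 0 < formE (fromCols B₁ B₂) (complexStructure X Y B₁ B₂) := by
  rw [formE_complexStructure hX hY.isHermitian, Complex.add_re]
  by_cases hB₁ : B₁ = 0
  · have hW : B₁ * X + B₂ ≠ 0 := by
      rintro hW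
      rw [hB₁, Matrix.zero_mul, zero_add] at hW
      exact hB (by rw [hB₁, hW, fromCols_zero])
    have := re_trace_mul_mul_conjTranspose_pos hY.inv hW
    have := re_trace_mul_mul_conjTranspose_nonneg hY.posSemidef B₁
    linarith
  · have := re_trace_mul_mul_conjTranspose_pos hY hB₁
    have := re_trace_mul_mul_conjTranspose_nonneg hY.inv.posSemidef (B₁ * X + B₂)
    linarith

end ComplexStructure

theorem statement16_general {n m : ℕ}
    (Z : Matrix (Fin m) (Fin m) ℂ)
    (hZ : ((2 * Complex.I)⁻¹ • (Z - Zᴴ)).PosDef)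
    (φ : Matrix (Fin n) (Fin m ⊕ Fin m) ℂ ≃ₗ[ℝ]
      (Matrix (Fin n) (Fin m) ℂ × Matrix (Fin n) (Fin m) ℂ))
    (hφ : ∀ β, φ β = phiZFormula Z β) :
    (∀ β β' γ : Matrix (Fin n) (Fin m ⊕ Fin m) ℂ,
      formE (β + β') γ = formE β γ + formE β' γ) ∧
    (∀ β γ γ' : Matrix (Fin n) (Fin m ⊕ Fin m) ℂ,
      formE β (γ + γ') = formE β γ + formE β γ') ∧
    (∀ (c : ℝ) (β γ : Matrix (Fin n) (Fin m ⊕ Fin m) ℂ),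
      formE (c • β) γ = c * formE β γ) ∧
    (∀ (c : ℝ) (β γ : Matrix (Fin n) (Fin m ⊕ Fin m) ℂ),
      formE β (c • γ) = c * formE β γ) ∧
    (∀ β : Matrix (Fin n) (Fin m ⊕ Fin m) ℂ, formE β β = 0) ∧
    (∀ β : Matrix (Fin n) (Fin m ⊕ Fin m) ℂ, β ≠ 0 →
      0 < formE β (φ.symm (Complex.I • φ β))) := by
  refine ⟨formE_add_left, formE_add_right, formE_smul_left, formE_smul_right, formE_self,
    fun β hβ => ?_⟩
  generalize hYdef : (2 * I)⁻¹ • (Z - Zᴴ) = Y at hZ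
  obtain ⟨X, hX, rfl⟩ : ∃ X : Matrix (Fin m) (Fin m) ℂ, X.IsHermitian ∧ Z = X + I • Y :=
    ⟨Z - I • Y, hYdef ▸ isHermitian_sub_I_smul Z, (sub_add_cancel Z _).symm⟩
  obtain ⟨B₁, B₂, rfl⟩ : ∃ B₁ B₂, β = fromCols B₁ B₂ := ⟨_, _, (fromCols_toCols β).symm⟩
  have hIβ : φ.symm (I • φ (fromCols B₁ B₂)) = complexStructure X Y B₁ B₂ := by
    rw [LinearEquiv.symm_apply_eq, hφ, hφ,
      phiZFormula_complexStructure hX hZ.isHermitian ((isUnit_iff_isUnit_det Y).mp hZ.isUnit)]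
  rw [hIβ]
  exact formE_complexStructure_pos hX hZ hβ

/-- The form `E(β, γ) = 2·Re(Tr(β J γ*))` is `ℝ`-bilinear and alternating, and it is
positive with respect to the complex structure `I_Z = φ_Z⁻¹ ∘ (i·) ∘ φ_Z`: for every
`β ≠ 0` one has `E(β, I_Z β) > 0`. -/
theorem statement16 {n m : ℕ} (hn : 1 ≤ n) (hm : 1 ≤ m)
    (Z : Matrix (Fin m) (Fin m) ℂ)
    (hZ : ((2 * Complex.I)⁻¹ • (Z - Zᴴ)).PosDef)
    (φ : Matrix (Fin n) (Fin m ⊕ Fin m) ℂ ≃ₗ[ℝ]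
      (Matrix (Fin n) (Fin m) ℂ × Matrix (Fin n) (Fin m) ℂ))
    (hφ : ∀ β, φ β = phiZFormula Z β) :
    (∀ β β' γ : Matrix (Fin n) (Fin m ⊕ Fin m) ℂ,
      formE (β + β') γ = formE β γ + formE β' γ) ∧
    (∀ β γ γ' : Matrix (Fin n) (Fin m ⊕ Fin m) ℂ,
      formE β (γ + γ') = formE β γ + formE β γ') ∧
    (∀ (c : ℝ) (β γ : Matrix (Fin n) (Fin m ⊕ Fin m) ℂ),
      formE (c • β) γ = c * formE β γ) ∧
    (∀ (c : ℝ) (β γ : Matrix (Fin n) (Fin m ⊕ Fin m) ℂ),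
      formE β (c • γ) = c * formE β γ) ∧
    (∀ β : Matrix (Fin n) (Fin m ⊕ Fin m) ℂ, formE β β = 0) ∧
    (∀ β : Matrix (Fin n) (Fin m ⊕ Fin m) ℂ, β ≠ 0 →
      0 < formE β (φ.symm (Complex.I • φ β))) :=
  statement16_general Z hZ φ hφ
end
end

section
/- For all indices 1 ≤ i, l ≤ n and 1 ≤ j, k ≤ r such that either n does not divide i + l − 2, or the pair (j, k) is not mixed (i.e. j, k are both ≤ p or both > p), the element e_{ij} ⊗ e'_{lk} lies in the submodule N. -/
open TensorProduct

noncomputable section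

/-- The diagonal operator `X_a` on `M`: `X_a e_{ij} = τ^{i-1}(a)·e_{ij}` if `j ≤ p` and
`X_a e_{ij} = τ^{i-1}(ā)·e_{ij}` if `j > p` (indices zero-based). -/
def Xop {A : Type*} [CommRing A] (n r p : ℕ) (τ c : A ≃+* A) (a : A)
    (w : Fin n × Fin r → A) : Fin n × Fin r → A :=
  fun ij => (if (ij.2 : ℕ) < p then (⇑τ)^[(ij.1 : ℕ)] a else (⇑τ)^[(ij.1 : ℕ)] (c a)) * w ij

/-- The shift operator `U` on `M`: `U e_{1j} = π·e_{nj}` and `U e_{ij} = e_{(i-1)j}` for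
`2 ≤ i ≤ n`, written in coordinates. -/
def Uop {A : Type*} [CommRing A] (n r : ℕ) (π : A)
    (w : Fin n × Fin r → A) : Fin n × Fin r → A :=
  fun ij =>
    if h : (ij.1 : ℕ) + 1 < n then w (⟨(ij.1 : ℕ) + 1, h⟩, ij.2)
    else π * w (⟨0, ij.1.pos⟩, ij.2)

/-- The diagonal operator `X'_a` on `M'`: `X'_a e'_{ij} = τ^{n+1-i}(ā)·e'_{ij}` if `j ≤ p`
and `X'_a e'_{ij} = τ^{n+1-i}(a)·e'_{ij}` if `j > p` (indices zero-based; `τ^n = id`). -/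
def X'op {A : Type*} [CommRing A] (n r p : ℕ) (τ c : A ≃+* A) (a : A)
    (w : Fin n × Fin r → A) : Fin n × Fin r → A :=
  fun ij =>
    (if (ij.2 : ℕ) < p then (⇑τ)^[n - (ij.1 : ℕ)] (c a) else (⇑τ)^[n - (ij.1 : ℕ)] a) * w ij

/-- The shift operator `U'` on `M'`: `U' e'_{1j} = π·e'_{nj}` and `U' e'_{ij} = e'_{(i-1)j}`
for `2 ≤ i ≤ n`, written in coordinates. -/
def U'op {A : Type*} [CommRing A] (n r : ℕ) (π : A)
    (w : Fin n × Fin r → A) : Fin n × Fin r → A :=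
  fun ij =>
    if h : (ij.1 : ℕ) + 1 < n then w (⟨(ij.1 : ℕ) + 1, h⟩, ij.2)
    else π * w (⟨0, ij.1.pos⟩, ij.2)

/-- The submodule `N ⊆ M ⊗_A M'` generated by the elements `(X_a m) ⊗ m' - m ⊗ (X'_a m')`
and `(U m) ⊗ m' - m ⊗ (U' m')`. -/
def relN {A : Type*} [CommRing A] (n r p : ℕ) (τ c : A ≃+* A) (π : A) :
    Submodule A ((Fin n × Fin r → A) ⊗[A] (Fin n × Fin r → A)) :=
  Submodule.span A
    ({x | ∃ (a : A) (m m' : Fin n × Fin r → A),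
        x = (Xop n r p τ c a m) ⊗ₜ[A] m' - m ⊗ₜ[A] (X'op n r p τ c a m')} ∪
      {x | ∃ m m' : Fin n × Fin r → A,
        x = (Uop n r π m) ⊗ₜ[A] m' - m ⊗ₜ[A] (U'op n r π m')})

/-- A pair `(j, k)` is mixed if `j ≤ p < k` or `k ≤ p < j` (zero-based: `j < p ≤ k` or
`k < p ≤ j`). -/
def MixedPair (p : ℕ) {r : ℕ} (j k : Fin r) : Prop :=
  ((j : ℕ) < p ∧ p ≤ (k : ℕ)) ∨ ((k : ℕ) < p ∧ p ≤ (j : ℕ))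

/-!
A basis tensor `e ⊗ e' = e_{ij} ⊗ e'_{lk}` is a simultaneous eigenvector: `X_x e = λ e` and
`X'_x e' = μ e'`, so the generator `X_x e ⊗ e' - e ⊗ X'_x e'` of `N` equals `(λ - μ) (e ⊗ e')`.
Both `λ = τ^{i-1}(x or x̄)` and `μ = τ^{n+1-l}(x̄ or x)` belong to the family `τ^s(x)`, `τ^s(x̄)`,
and they are the same member of it exactly when `n ∣ i + l - 2` and `(j, k)` is mixed.
Otherwise `λ - μ` is a unit, whence `e ⊗ e' ∈ N`.
-/

section Eigen

variable {A : Type*} [CommRing A] {n r : ℕ} (p : ℕ) (τ c : A ≃+* A)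

theorem Xop_single (a b : A) (i : Fin n) (j : Fin r) :
    Xop n r p τ c a (Pi.single (i, j) b) =
      (⇑τ)^[(i : ℕ)] (bif decide (p ≤ (j : ℕ)) then c a else a) • Pi.single (i, j) b := by
  ext ij
  rcases eq_or_ne ij (i, j) with rfl | hne
  · by_cases hj : (j : ℕ) < p <;> simp [Xop, ← not_lt, hj]
  · simp [Xop, Pi.single_eq_of_ne hne]

theorem X'op_single (a b : A) (l : Fin n) (k : Fin r) :
    X'op n r p τ c a (Pi.single (l, k) b) =
      (⇑τ)^[n - (l : ℕ)] (bif decide ((k : ℕ) < p) then c a else a) • Pi.single (l, k) b := by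
  ext ij
  rcases eq_or_ne ij (l, k) with rfl | hne
  · by_cases hk : (k : ℕ) < p <;> simp [X'op, hk]
  · simp [X'op, Pi.single_eq_of_ne hne]

theorem tmul_mem_relN_of_eigenvectors (π : A) {a s t : A} {m m' : Fin n × Fin r → A}
    (hm : Xop n r p τ c a m = s • m) (hm' : X'op n r p τ c a m' = t • m')
    (hst : IsUnit (s - t)) :
    m ⊗ₜ[A] m' ∈ relN n r p τ c π := by
  have hrel : (s • m) ⊗ₜ[A] m' - m ⊗ₜ[A] (t • m') ∈ relN n r p τ c π :=
    Submodule.subset_span (Or.inl ⟨a, m, m', by rw [hm, hm']⟩)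
  rw [← smul_tmul', tmul_smul, ← sub_smul s t (m ⊗ₜ[A] m')] at hrel
  exact (Submodule.smul_mem_iff_of_isUnit _ hst).mp hrel

end Eigen

theorem decide_le_eq_decide_lt_iff_mixedPair {p r : ℕ} (j k : Fin r) :
    decide (p ≤ (j : ℕ)) = decide ((k : ℕ) < p) ↔ MixedPair p j k := by
  unfold MixedPair
  by_cases hj : p ≤ (j : ℕ) <;> by_cases hk : (k : ℕ) < p <;> simp [hj, hk]; omega

theorem dvd_add_of_eq_sub_mod {n i l : ℕ} (hl : l < n) (hi : i = (n - l) % n) : n ∣ i + l := by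
  rw [Nat.dvd_iff_mod_eq_zero, hi, Nat.mod_add_mod, Nat.sub_add_cancel hl.le, Nat.mod_self]

theorem statement18_general {A : Type*} [CommRing A] (n r p : ℕ)
    (τ c : A ≃+* A) (hτn : ∀ a, (⇑τ)^[n] a = a)
    (π : A)
    (hx : ∃ x : A, ∀ (i i' : Fin n) (b b' : Bool), (i, b) ≠ (i', b') →
      (⇑τ)^[(i : ℕ)] (bif b then c x else x) ≠ (⇑τ)^[(i' : ℕ)] (bif b' then c x else x) ∧
      IsUnit ((⇑τ)^[(i : ℕ)] (bif b then c x else x) -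
        (⇑τ)^[(i' : ℕ)] (bif b' then c x else x)))
    (i l : Fin n) (j k : Fin r)
    (h : ¬ (n ∣ ((i : ℕ) + (l : ℕ))) ∨ ¬ MixedPair p j k) :
    (Pi.single (i, j) (1 : A)) ⊗ₜ[A] (Pi.single (l, k) (1 : A)) ∈ relN n r p τ c π := by
  obtain ⟨x, hx⟩ := hx
  -- since `τ^n = id`, the power `τ^{n-l}` in `X'` equals `τ^{l'}` with `l' = (n - l) mod n`
  let l' : Fin n := ⟨(n - l) % n, Nat.mod_lt _ l.pos⟩
  have hX' := X'op_single p τ c x 1 l k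
  rw [← Function.IsPeriodicPt.iterate_mod_apply (hτn _)] at hX'
  refine tmul_mem_relN_of_eigenvectors p τ c π (Xop_single p τ c x 1 i j) hX' ?_
  refine (hx i l' _ _ fun heq => ?_).2
  obtain ⟨hil, hb⟩ := Prod.mk.inj heq
  rcases h with hnd | hmix
  · exact hnd (dvd_add_of_eq_sub_mod l.isLt (congrArg Fin.val hil))
  · exact hmix ((decide_le_eq_decide_lt_iff_mixedPair j k).mp hb)

/-- For indices with either `n ∤ i + l - 2` or `(j, k)` not mixed, the basis tensor
`e_{ij} ⊗ e'_{lk}` lies in the submodule `N`. -/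
theorem statement18 {A : Type*} [CommRing A] (n r p : ℕ)
    (hn : 2 ≤ n) (hr : 2 ≤ r) (hp : 1 ≤ p) (hpr : p < r)
    (τ c : A ≃+* A) (hτn : ∀ a, (⇑τ)^[n] a = a)
    (hc : ∀ a, c (c a) = a) (hcτ : ∀ a, c (τ a) = τ (c a))
    (π : A) (hπ : τ π = π)
    (hx : ∃ x : A, ∀ (i i' : Fin n) (b b' : Bool), (i, b) ≠ (i', b') →
      (⇑τ)^[(i : ℕ)] (bif b then c x else x) ≠ (⇑τ)^[(i' : ℕ)] (bif b' then c x else x) ∧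
      IsUnit ((⇑τ)^[(i : ℕ)] (bif b then c x else x) -
        (⇑τ)^[(i' : ℕ)] (bif b' then c x else x)))
    (i l : Fin n) (j k : Fin r)
    (h : ¬ (n ∣ ((i : ℕ) + (l : ℕ))) ∨ ¬ MixedPair p j k) :
    (Pi.single (i, j) (1 : A)) ⊗ₜ[A] (Pi.single (l, k) (1 : A)) ∈ relN n r p τ c π :=
  statement18_general n r p τ c hτn π hx i l j k h

end
end
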